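/- In the ring R = ℂ[x_1, …, x_6]/(x_2² − x_1x_3, x_5² − x_4x_6), let P be the ideal generated by the images of x_1 and x_2. Then P is a prime ideal, the localization R_P of R at P is a discrete valuation ring, and, denoting by m the maximal ideal of R_P, the image of x_2 lies in m but not in m², while the image of x_1 lies in m² but not in m³ (that is, the normalized valuation of x_2 is 1 and that of x_1 is 2). -/

import Mathlib

open MvPolynomial

/-- The ideal of `ℂ[x₁,…,x₆]` generated by `x₂² − x₁x₃` and `x₅² − x₄x₆`
(variables are 0-indexed: `X 0 = x₁`, …, `X 5 = x₆`). -/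
noncomputable def I6 : Ideal (MvPolynomial (Fin 6) ℂ) :=
  Ideal.span {X 1 ^ 2 - X 0 * X 2, X 4 ^ 2 - X 3 * X 5}

/-- The ideal `P` of `R = ℂ[x₁,…,x₆]/(x₂² − x₁x₃, x₅² − x₄x₆)` generated by the
images of `x₁` and `x₂`. -/
noncomputable def P12 : Ideal (MvPolynomial (Fin 6) ℂ ⧸ I6) :=
  Ideal.span {Ideal.Quotient.mk I6 (X 0), Ideal.Quotient.mk I6 (X 1)}

/-!
A ring `B[u, v, √(uv)]` over a domain `B` is a domain: `uv` has odd degree in `u`, so it is not a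
square in the fraction field of `B[v][u]`, and then the norm `a² - uv b²` of `a + b√(uv)` vanishes
only when `a = b = 0`. Sending `x₁, x₂, x₃` and `x₄, x₅, x₆` to `u, √(uv), v` in two nested
copies of this construction embeds `R` into a domain, so `R` is a domain; killing `x₁, x₂` and
keeping one copy shows in the same way that `P` is prime.

In `R_P` the element `x₃ ∉ P` is a unit and `x₁ = x₂² / x₃`, so the maximal ideal `(x₁, x₂)` is
generated by `x₂ ≠ 0`. A Noetherian local domain with principal nonzero maximal ideal is a DVR, `x₂`
is a uniformizer and `x₁` is `x₂²` times a unit.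
-/

namespace Polynomial

open AdjoinRoot

variable {A : Type*} [CommRing A] [IsDomain A]

theorem _root_.AdjoinRoot.exists_eq_of_add_of_mul_root (c : A) (x : AdjoinRoot (X ^ 2 - C c)) :
    ∃ a b : A, x = of _ a + of _ b * root _ := by
  have hmonic : (X ^ 2 - C c).Monic := monic_X_pow_sub_C c two_ne_zero
  have : Nontrivial (AdjoinRoot (X ^ 2 - C c)) :=
    AdjoinRoot.nontrivial _ (by rw [degree_X_pow_sub_C two_pos]; norm_num)
  obtain ⟨f, hf, rfl⟩ := (powerBasis' hmonic).exists_eq_aeval x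
  rw [powerBasis'_dim, natDegree_X_pow_sub_C] at hf
  refine ⟨f.coeff 0, f.coeff 1, ?_⟩
  conv_lhs => rw [eq_X_add_C_of_natDegree_le_one (Nat.le_of_lt_succ hf)]
  simp only [powerBasis'_gen, map_add, map_mul, aeval_C, aeval_X, AdjoinRoot.algebraMap_eq]
  ring

theorem _root_.AdjoinRoot.isDomain_X_pow_two_sub_C {c : A}
    (hc : ∀ a b : A, a ^ 2 = c * b ^ 2 → b = 0) :
    IsDomain (AdjoinRoot (X ^ 2 - C c)) := by
  have hdeg : (X ^ 2 - C c).degree ≠ 0 := by rw [degree_X_pow_sub_C two_pos]; norm_num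
  have : Nontrivial (AdjoinRoot (X ^ 2 - C c)) := AdjoinRoot.nontrivial _ hdeg
  have hroot : root (X ^ 2 - C c) ^ 2 = of _ c := by
    have h := mk_self (f := X ^ 2 - C c)
    rwa [map_sub, map_pow, mk_X, mk_C, sub_eq_zero] at h
  -- `x * conj x` is the norm of `x` down to `A`
  let conj : AdjoinRoot (X ^ 2 - C c) →+* AdjoinRoot (X ^ 2 - C c) :=
    lift (of _) (-root _) (by simp [hroot])
  have hnorm (a b : A) : (of _ a + of _ b * root _) * conj (of _ a + of _ b * root _) =
      of (X ^ 2 - C c) (a ^ 2 - c * b ^ 2) := by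
    simp only [conj, map_add, map_mul, lift_of, lift_root, map_sub, map_pow, ← hroot]
    ring
  have hnorm_eq_zero {a b : A} (h : a ^ 2 - c * b ^ 2 = 0) :
      of (X ^ 2 - C c) a + of _ b * root _ = 0 := by
    obtain rfl : b = 0 := hc a b (sub_eq_zero.mp h)
    obtain rfl : a = 0 := pow_eq_zero_iff two_ne_zero |>.mp (by simpa using h)
    simp
  refine @NoZeroDivisors.to_isDomain _ _ _ ⟨fun {x y} hxy => ?_⟩
  obtain ⟨a, b, rfl⟩ := AdjoinRoot.exists_eq_of_add_of_mul_root c x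
  obtain ⟨d, e, rfl⟩ := AdjoinRoot.exists_eq_of_add_of_mul_root c y
  have hprod : (a ^ 2 - c * b ^ 2) * (d ^ 2 - c * e ^ 2) = 0 := by
    apply of.injective_of_degree_ne_zero hdeg
    rw [map_mul, ← hnorm, ← hnorm, map_zero]
    linear_combination (conj (of _ a + of _ b * root _) * conj (of _ d + of _ e * root _)) * hxy
  exact (mul_eq_zero.mp hprod).imp hnorm_eq_zero hnorm_eq_zero

theorem eq_zero_of_sq_eq_X_mul_C_mul_sq {d : A} (hd : d ≠ 0) {a b : A[X]}
    (h : a ^ 2 = X * C d * b ^ 2) : b = 0 := by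
  by_contra hb
  have ha : a ≠ 0 := by
    rintro rfl
    simp [hd, hb, X_ne_zero] at h
  have := congrArg natDegree h
  rw [natDegree_mul (by simp [hd, X_ne_zero]) (pow_ne_zero 2 hb),
    natDegree_mul X_ne_zero (by simpa), natDegree_pow, natDegree_pow, natDegree_X,
    natDegree_C] at this
  omega

end Polynomial

open scoped Polynomial

/-- `B[u, v, w] / (w² - uv)`, with `u` the outer and `v` the inner polynomial variable. -/
abbrev QuadricCone (B : Type*) [CommRing B] : Type _ :=
  AdjoinRoot (.X ^ 2 - .C (.X * .C .X) : B[X][X][X])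

namespace QuadricCone

variable {B : Type*} [CommRing B]

noncomputable def u : QuadricCone B := AdjoinRoot.of _ .X

noncomputable def v : QuadricCone B := AdjoinRoot.of _ (.C .X)

noncomputable def w : QuadricCone B := AdjoinRoot.root _

noncomputable def ι : B →+* QuadricCone B := (AdjoinRoot.of _).comp (Polynomial.C.comp Polynomial.C)

theorem w_sq : (w : QuadricCone B) ^ 2 = u * v := by
  have h := AdjoinRoot.mk_self (f := (.X ^ 2 - .C (.X * .C .X) : B[X][X][X]))
  rw [map_sub, map_pow, AdjoinRoot.mk_X, AdjoinRoot.mk_C, sub_eq_zero] at h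
  rw [w, h, u, v, ← map_mul]

instance [IsDomain B] : IsDomain (QuadricCone B) :=
  AdjoinRoot.isDomain_X_pow_two_sub_C fun _ _ =>
    Polynomial.eq_zero_of_sq_eq_X_mul_C_mul_sq Polynomial.X_ne_zero

variable {S : Type*} [CommRing S]

open Polynomial in
noncomputable def lift (f : B →+* S) (x y z : S) (h : z ^ 2 = x * y) : QuadricCone B →+* S :=
  AdjoinRoot.lift (eval₂RingHom (eval₂RingHom f y) x) z (by simp [h]; ring)

variable (f : B →+* S) (x y z : S) (h : z ^ 2 = x * y)

@[simp] theorem lift_ι (b : B) : lift f x y z h (ι b) = f b := by simp [lift, ι]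
@[simp] theorem lift_u : lift f x y z h u = x := by simp [lift, u]
@[simp] theorem lift_v : lift f x y z h v = y := by simp [lift, v]
@[simp] theorem lift_w : lift f x y z h w = z := by simp [lift, w]

end QuadricCone

theorem Ideal.isPrime_of_comp_eq_mk {A S : Type*} [CommRing A] [CommRing S] [IsDomain S]
    {K : Ideal A} (θ : A →+* S) (hK : K ≤ RingHom.ker θ) (ψ : S →+* A ⧸ K)
    (hψ : ψ.comp θ = Ideal.Quotient.mk K) : K.IsPrime := by
  have hker : RingHom.ker θ = K := by
    refine le_antisymm (fun x hx => ?_) hK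
    rw [← Ideal.Quotient.eq_zero_iff_mem, ← hψ, RingHom.comp_apply, hx, map_zero]
  exact hker ▸ RingHom.ker_isPrime θ

open MvPolynomial QuadricCone

local notation "mk" => Ideal.Quotient.mk

theorem mk_X_one_sq : mk I6 (X 1) ^ 2 = mk I6 (X 0) * mk I6 (X 2) := by
  rw [← map_pow, ← map_mul, Ideal.Quotient.eq]
  exact Ideal.subset_span (by simp)

theorem mk_X_four_sq : mk I6 (X 4) ^ 2 = mk I6 (X 3) * mk I6 (X 5) := by
  rw [← map_pow, ← map_mul, Ideal.Quotient.eq]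
  exact Ideal.subset_span (by simp)

instance isPrime_I6 : I6.IsPrime := by
  refine Ideal.isPrime_of_comp_eq_mk (eval₂Hom (ι.comp ι) ![ι u, ι w, ι v, u, w, v]) ?_
    (lift (lift ((mk I6).comp C) (mk I6 (X 0)) (mk I6 (X 2)) (mk I6 (X 1)) mk_X_one_sq)
      (mk I6 (X 3)) (mk I6 (X 5)) (mk I6 (X 4)) mk_X_four_sq) ?_
  · rw [I6, Ideal.span_le]
    rintro p (rfl | rfl) <;> simp [w_sq, ← map_pow, ← map_mul]
  · refine MvPolynomial.ringHom_ext (fun r => by simp) (fun i => ?_)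
    fin_cases i <;> simp

theorem isPrime_span_X_sup_I6 : (Ideal.span {X 0, X 1} ⊔ I6).IsPrime := by
  set J := Ideal.span {X 0, X 1} ⊔ I6
  have hX {i : Fin 6} (hi : i = 0 ∨ i = 1) : mk J (X i) = 0 :=
    Ideal.Quotient.eq_zero_iff_mem.mpr (Ideal.mem_sup_left (Ideal.subset_span (by simpa using hi)))
  refine Ideal.isPrime_of_comp_eq_mk
    (eval₂Hom (ι.comp Polynomial.C) ![0, 0, ι .X, u, w, v]) ?_
    (lift (Polynomial.eval₂RingHom ((mk J).comp C) (mk J (X 2)))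
      (mk J (X 3)) (mk J (X 5)) (mk J (X 4)) ?_) ?_
  · rw [sup_le_iff, I6, Ideal.span_le, Ideal.span_le]
    constructor <;> rintro p (rfl | rfl) <;> simp [w_sq]
  · rw [← map_pow, ← map_mul, Ideal.Quotient.eq]
    exact Ideal.mem_sup_right (Ideal.subset_span (by simp))
  · refine MvPolynomial.ringHom_ext (fun r => by simp) (fun i => ?_)
    fin_cases i <;> simp [hX]

theorem P12_eq_map : P12 = (Ideal.span {X 0, X 1} ⊔ I6).map (mk I6) := by
  rw [Ideal.map_sup, Ideal.map_quotient_self, sup_bot_eq, Ideal.map_span, Set.image_pair, P12]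

theorem isPrime_P12 : P12.IsPrime := by
  have := isPrime_span_X_sup_I6
  rw [P12_eq_map]
  exact Ideal.map_isPrime_of_surjective Ideal.Quotient.mk_surjective
    (by rw [Ideal.mk_ker]; exact le_sup_right)

theorem X_one_notMem_I6 : (X 1 : MvPolynomial (Fin 6) ℂ) ∉ I6 := by
  have hker : I6 ≤ RingHom.ker (eval ![1, 1, 1, 0, 0, 0]) := by
    rw [I6, Ideal.span_le]
    rintro p (rfl | rfl) <;> simp
  exact fun h => by simpa using hker h

theorem X_two_notMem_span_X_sup_I6 :
    (X 2 : MvPolynomial (Fin 6) ℂ) ∉ Ideal.span {X 0, X 1} ⊔ I6 := by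
  have hker : Ideal.span {X 0, X 1} ⊔ I6 ≤ RingHom.ker (eval ![0, 0, 1, 0, 0, 0]) := by
    rw [sup_le_iff, I6, Ideal.span_le, Ideal.span_le]
    constructor <;> rintro p (rfl | rfl) <;> simp
  exact fun h => by simpa using hker h

open IsLocalRing

theorem maximalIdeal_atPrime_eq_span {A : Type*} [CommRing A] {P : Ideal A} [P.IsPrime]
    {a t s : A} (hP : P = Ideal.span {a, t}) (hs : s ∉ P) (hrel : t ^ 2 = a * s) :
    maximalIdeal (Localization.AtPrime P) = Ideal.span {algebraMap A _ t} := by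
  have hu : IsUnit (algebraMap A (Localization.AtPrime P) s) :=
    IsLocalization.map_units _ (⟨s, hs⟩ : P.primeCompl)
  have ha : algebraMap A _ a ∈ Ideal.span {algebraMap A (Localization.AtPrime P) t} := by
    refine Ideal.mem_span_singleton.mpr ⟨algebraMap A _ t * ↑hu.unit⁻¹, ?_⟩
    rw [← mul_assoc, ← sq, Units.eq_mul_inv_iff_mul_eq, IsUnit.unit_spec, ← map_pow, ← map_mul,
      hrel]
  rw [← Localization.AtPrime.map_eq_maximalIdeal, congrArg (Ideal.map _) hP, Ideal.map_span,
    Set.image_pair, Ideal.span_insert,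
    sup_eq_right.mpr (Ideal.span_singleton_le_iff_mem _ |>.mpr ha)]

section PrincipalMaximalIdeal

variable {R : Type*} [CommRing R] [IsDomain R] [IsLocalRing R] {t : R}
  (hm : maximalIdeal R = Ideal.span {t}) (ht : t ≠ 0)

include hm ht

theorem mem_maximalIdeal_pow_iff_of_mul_eq_pow {x u : R} (hu : IsUnit u) {n : ℕ}
    (hx : x * u = t ^ n) (k : ℕ) : x ∈ maximalIdeal R ^ k ↔ k ≤ n := by
  have htm : t ∈ maximalIdeal R := hm ▸ Ideal.mem_span_singleton_self t
  have ht' : ¬IsUnit t := (mem_maximalIdeal t).mp htm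
  rw [hm, Ideal.span_singleton_pow, Ideal.mem_span_singleton, ← hu.dvd_mul_right, hx,
    pow_dvd_pow_iff ht ht']

theorem isDiscreteValuationRing_of_maximalIdeal_eq_span [IsNoetherianRing R] :
    IsDiscreteValuationRing R := by
  have htm : t ∈ maximalIdeal R := hm ▸ Ideal.mem_span_singleton_self t
  have hnf : ¬IsField R := fun h => ht <| by simpa [isField_iff_maximalIdeal_eq.mp h] using htm
  have hprincipal : (maximalIdeal R).IsPrincipal := ⟨t, hm⟩
  exact ((IsDiscreteValuationRing.TFAE R hnf).out 0 4).mpr hprincipal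

end PrincipalMaximalIdeal

/-- `P` is prime, the localization `R_P` is a discrete valuation ring,
the image of `x₂` lies in the maximal ideal `m` of `R_P` but not in `m²`, and the
image of `x₁` lies in `m²` but not in `m³`. -/
theorem stmt_12 :
    ∃ hP : P12.IsPrime,
      haveI := hP
      ∃ hdom : IsDomain (Localization.AtPrime P12),
        haveI := hdom
        IsDiscreteValuationRing (Localization.AtPrime P12) ∧
        algebraMap _ (Localization.AtPrime P12) (Ideal.Quotient.mk I6 (X 1)) ∈
          IsLocalRing.maximalIdeal (Localization.AtPrime P12) ∧
        algebraMap _ (Localization.AtPrime P12) (Ideal.Quotient.mk I6 (X 1)) ∉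
          IsLocalRing.maximalIdeal (Localization.AtPrime P12) ^ 2 ∧
        algebraMap _ (Localization.AtPrime P12) (Ideal.Quotient.mk I6 (X 0)) ∈
          IsLocalRing.maximalIdeal (Localization.AtPrime P12) ^ 2 ∧
        algebraMap _ (Localization.AtPrime P12) (Ideal.Quotient.mk I6 (X 0)) ∉
          IsLocalRing.maximalIdeal (Localization.AtPrime P12) ^ 3 := by
  have hP := isPrime_P12
  have hs : mk I6 (X 2) ∉ P12 := by
    rw [P12_eq_map, Ideal.mem_quotient_iff_mem le_sup_right]
    exact X_two_notMem_span_X_sup_I6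
  have hm := maximalIdeal_atPrime_eq_span (P := P12) rfl hs mk_X_one_sq
  have ht : algebraMap _ (Localization.AtPrime P12) (mk I6 (X 1)) ≠ 0 := by
    refine (map_ne_zero_iff _ (IsLocalization.injective (Localization.AtPrime P12)
      P12.primeCompl_le_nonZeroDivisors)).mpr ?_
    rw [ne_eq, Ideal.Quotient.eq_zero_iff_mem]
    exact X_one_notMem_I6
  have hu : IsUnit (algebraMap _ (Localization.AtPrime P12) (mk I6 (X 2))) :=
    IsLocalization.map_units _ (⟨_, hs⟩ : P12.primeCompl)
  have hx1 := mem_maximalIdeal_pow_iff_of_mul_eq_pow hm ht isUnit_one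
    ((mul_one _).trans (pow_one _).symm)
  have hx0 := mem_maximalIdeal_pow_iff_of_mul_eq_pow hm ht hu
    (by rw [← map_mul, ← mk_X_one_sq, map_pow])
  refine ⟨hP, inferInstance, isDiscreteValuationRing_of_maximalIdeal_eq_span hm ht, ?_, ?_, ?_, ?_⟩
  · simpa using hx1 1
  · simpa using hx1 2
  · simpa using hx0 2
  · simpa using hx0 3
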